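/- arXiv:1302.5325 — 4 statements merged into one kernel-verified Lean document; each statement's English description precedes it below -/
import Mathlib

section
/- If p is a polynomial with complex coefficients whose Gaussian expectation vanishes, E(p) = 0, then there exists a polynomial q with complex coefficients such that p = q′ − X·q. Hence the kernel of the Gaussian expectation E on polynomials equals the image of the map q ↦ q′ − X·q. -/
/-!
Write `T q = q' - X q`. Since `(q e^{-x²/2})' = (T q) e^{-x²/2}` and `q e^{-x²/2}` vanishes
at `±∞`, every `T q` has Gaussian expectation zero. Conversely,
`X ^ (n + 2) = T (-X ^ (n + 1)) + (n + 1) X ^ n` shows by induction that every polynomial is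
`T q + c` for a constant `c`, and then its expectation is `c`.
-/

open Polynomial MeasureTheory

noncomputable def gaussianExpectation (p : Polynomial ℂ) : ℂ :=
  (∫ x : ℝ, p.eval (x : ℂ) * Real.exp (-x ^ 2 / 2)) /
    (∫ x : ℝ, (Real.exp (-x ^ 2 / 2) : ℂ))

open Filter Topology Asymptotics Real

namespace Polynomial

section CommRing

variable {R : Type*} [CommRing R]

theorem exists_X_pow_eq_derivative_sub_X_mul_add_C (n : ℕ) :
    ∃ (q : R[X]) (c : R), X ^ n = derivative q - X * q + C c := by
  induction n using Nat.twoStepInduction with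
  | zero => exact ⟨0, 1, by simp⟩
  | one => exact ⟨-1, 0, by simp⟩
  | more n ih _ =>
    obtain ⟨q, c, hq⟩ := ih
    refine ⟨-X ^ (n + 1) + C ((n : R) + 1) * q, ((n : R) + 1) * c, ?_⟩
    simp only [derivative_add, derivative_neg, derivative_C_mul, derivative_X_pow, C_mul]
    push_cast
    linear_combination (C ((n : R) + 1)) * hq

theorem exists_eq_derivative_sub_X_mul_add_C (p : R[X]) :
    ∃ (q : R[X]) (c : R), p = derivative q - X * q + C c := by
  induction p using Polynomial.induction_on' with
  | add p₁ p₂ h₁ h₂ =>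
    obtain ⟨q₁, c₁, rfl⟩ := h₁
    obtain ⟨q₂, c₂, rfl⟩ := h₂
    exact ⟨q₁ + q₂, c₁ + c₂, by simp only [derivative_add, C_add]; ring⟩
  | monomial n a =>
    obtain ⟨q, c, hq⟩ := exists_X_pow_eq_derivative_sub_X_mul_add_C (R := R) n
    refine ⟨C a * q, a * c, ?_⟩
    rw [← C_mul_X_pow_eq_monomial, hq, derivative_C_mul, C_mul]
    ring

end CommRing

theorem tendsto_eval_mul_exp_neg_mul_sq_cocompact (p : ℂ[X]) {a : ℝ} (ha : 0 < a) :
    Tendsto (fun x : ℝ => p.eval (x : ℂ) * (rexp (-a * x ^ 2) : ℂ)) (cocompact ℝ) (𝓝 0) := by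
  induction p using Polynomial.induction_on' with
  | add p q hp hq => simpa only [eval_add, add_mul, add_zero] using hp.add hq
  | monomial n c =>
    rw [tendsto_zero_iff_norm_tendsto_zero]
    have h := (tendsto_rpow_abs_mul_exp_neg_mul_sq_cocompact ha n).const_mul ‖c‖
    rw [mul_zero] at h
    refine h.congr fun x => ?_
    simp only [eval_monomial, norm_mul, norm_pow, Complex.norm_real, norm_eq_abs,
      abs_of_pos (exp_pos _), rpow_natCast, mul_assoc]

theorem integrable_eval_mul_exp_neg_mul_sq (p : ℂ[X]) {a : ℝ} (ha : 0 < a) :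
    Integrable fun x : ℝ => p.eval (x : ℂ) * (rexp (-a * x ^ 2) : ℂ) := by
  have hsplit (x : ℝ) : p.eval (x : ℂ) * (rexp (-a * x ^ 2) : ℂ) =
      p.eval (x : ℂ) * (rexp (-(a / 2) * x ^ 2) : ℂ) * (rexp (-(a / 2) * x ^ 2) : ℂ) := by
    rw [mul_assoc, ← Complex.ofReal_mul, ← exp_add]
    ring_nf
  have hO : (fun x : ℝ => p.eval (x : ℂ) * (rexp (-a * x ^ 2) : ℂ)) =O[cocompact ℝ]
      fun x => (rexp (-(a / 2) * x ^ 2) : ℂ) := by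
    simp only [hsplit]
    have hbdd :=
      (p.tendsto_eval_mul_exp_neg_mul_sq_cocompact (half_pos ha)).norm.isBoundedUnder_le
    simpa only [one_mul] using ((isBigO_one_iff ℂ).mpr hbdd).mul
      (isBigO_refl (fun x : ℝ => (rexp (-(a / 2) * x ^ 2) : ℂ)) (cocompact ℝ))
  refine (Continuous.locallyIntegrable (by fun_prop)).integrable_of_isBigO_cocompact hO ?_
  exact (integrable_exp_neg_mul_sq (half_pos ha)).ofReal.integrableAtFilter _

theorem integrable_eval_mul_exp_neg_sq_div_two (p : ℂ[X]) :
    Integrable fun x : ℝ => p.eval (x : ℂ) * (rexp (-x ^ 2 / 2) : ℂ) := by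
  refine (p.integrable_eval_mul_exp_neg_mul_sq one_half_pos).congr (ae_of_all _ fun x => ?_)
  simp only
  ring_nf

theorem hasDerivAt_eval_mul_exp_neg_sq_div_two (q : ℂ[X]) (x : ℝ) :
    HasDerivAt (fun x : ℝ => q.eval (x : ℂ) * (rexp (-x ^ 2 / 2) : ℂ))
      ((derivative q - X * q).eval (x : ℂ) * (rexp (-x ^ 2 / 2) : ℂ)) x := by
  have hq : HasDerivAt (fun x : ℝ => q.eval (x : ℂ)) ((derivative q).eval (x : ℂ)) x :=
    (q.hasDerivAt (x : ℂ)).comp_ofReal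
  have hexp : HasDerivAt (fun x : ℝ => rexp (-x ^ 2 / 2)) (rexp (-x ^ 2 / 2) * -x) x := by
    have hexponent : HasDerivAt (fun x : ℝ => -x ^ 2 / 2) (-x) x := by
      simpa [neg_div] using ((hasDerivAt_pow 2 x).div_const 2).fun_neg
    exact hexponent.exp
  refine (hq.mul hexp.ofReal_comp).congr_deriv ?_
  simp only [eval_sub, eval_mul, eval_X]
  push_cast
  ring

theorem integral_eval_derivative_sub_X_mul_mul_exp_neg_sq_div_two (q : ℂ[X]) :
    ∫ x : ℝ, (derivative q - X * q).eval (x : ℂ) * (rexp (-x ^ 2 / 2) : ℂ) = 0 := by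
  have hdecay : Tendsto (fun x : ℝ => q.eval (x : ℂ) * (rexp (-x ^ 2 / 2) : ℂ))
      (cocompact ℝ) (𝓝 0) := by
    refine (q.tendsto_eval_mul_exp_neg_mul_sq_cocompact one_half_pos).congr fun x => ?_
    ring_nf
  rw [cocompact_eq_atBot_atTop, tendsto_sup] at hdecay
  simpa using integral_of_hasDerivAt_of_tendsto (q.hasDerivAt_eval_mul_exp_neg_sq_div_two)
    (derivative q - X * q).integrable_eval_mul_exp_neg_sq_div_two hdecay.1 hdecay.2

end Polynomial

theorem integral_ofReal_exp_neg_sq_div_two_ne_zero :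
    ∫ x : ℝ, (rexp (-x ^ 2 / 2) : ℂ) ≠ 0 := by
  have h : ∫ x : ℝ, rexp (-x ^ 2 / 2) = √(π / (1 / 2)) := by
    rw [← integral_gaussian]
    ring_nf
  rw [integral_complex_ofReal, h, Complex.ofReal_ne_zero]
  positivity

theorem gaussianExpectation_add (p q : ℂ[X]) :
    gaussianExpectation (p + q) = gaussianExpectation p + gaussianExpectation q := by
  simp only [gaussianExpectation, eval_add, add_mul, ← add_div]
  rw [integral_add p.integrable_eval_mul_exp_neg_sq_div_two
    q.integrable_eval_mul_exp_neg_sq_div_two]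

theorem gaussianExpectation_C (c : ℂ) : gaussianExpectation (C c) = c := by
  rw [gaussianExpectation]
  simp only [eval_C, integral_const_mul]
  exact mul_div_cancel_right₀ c integral_ofReal_exp_neg_sq_div_two_ne_zero

theorem gaussianExpectation_derivative_sub_X_mul (q : ℂ[X]) :
    gaussianExpectation (derivative q - X * q) = 0 := by
  rw [gaussianExpectation, q.integral_eval_derivative_sub_X_mul_mul_exp_neg_sq_div_two, zero_div]

theorem gaussian_expectation_kernel_eq_image :
    (∀ p : Polynomial ℂ, gaussianExpectation p = 0 →
      ∃ q : Polynomial ℂ, p = derivative q - X * q) ∧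
    {p : Polynomial ℂ | gaussianExpectation p = 0} =
      Set.range (fun q : Polynomial ℂ => derivative q - X * q) := by
  have kernel_sub_image (p : ℂ[X]) (hp : gaussianExpectation p = 0) :
      ∃ q : ℂ[X], p = derivative q - X * q := by
    obtain ⟨q, c, rfl⟩ := p.exists_eq_derivative_sub_X_mul_add_C
    rw [gaussianExpectation_add, gaussianExpectation_derivative_sub_X_mul,
      gaussianExpectation_C, zero_add] at hp
    exact ⟨q, by rw [hp, C_0, add_zero]⟩
  refine ⟨kernel_sub_image, Set.ext fun p => ⟨fun hp => ?_, ?_⟩⟩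
  · obtain ⟨q, rfl⟩ := kernel_sub_image p hp
    exact ⟨q, rfl⟩
  · rintro ⟨q, rfl⟩
    exact gaussianExpectation_derivative_sub_X_mul q
end

section
/- Two polynomials p and r with complex coefficients have equal Gaussian expectation, E(p) = E(r), if and only if there exists a polynomial q with complex coefficients such that p − r = q′ − X·q (i.e., if and only if p and r represent the same homology class in the complex whose differential sends qη to q′ − Xq). -/
open Polynomial MeasureTheory

/-!
`E` is a linear functional with `E 1 = 1`, and it kills every `q' - X q`, since
`(q' - x q) e^{-x²/2}` is the derivative of the integrable function `q e^{-x²/2}`.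
Conversely the image of `d q = q' - X q` together with the constants spans all polynomials,
because `X ^ (n + 2) = d (-X ^ (n + 1)) + (n + 1) X ^ n`. A linear functional that vanishes
on a subspace `B` but not on a vector `v` with `B + ℂ v` the whole space has kernel exactly `B`,
so `ker E = range d`.
-/

theorem LinearMap.ker_eq_of_le_ker_of_sup_span_singleton_eq_top {K M : Type*} [DivisionRing K]
    [AddCommGroup M] [Module K M] {φ : M →ₗ[K] K} {B : Submodule K M} {v : M}
    (hB : B ≤ ker φ) (hv : φ v ≠ 0) (hspan : B ⊔ K ∙ v = ⊤) : ker φ = B := by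
  refine le_antisymm (fun x hx => ?_) hB
  obtain ⟨b, hb, _, hav, rfl⟩ := Submodule.mem_sup.mp (hspan ▸ Submodule.mem_top (x := x))
  obtain ⟨a, rfl⟩ := Submodule.mem_span_singleton.mp hav
  have ha : a = 0 := by
    simpa [LinearMap.mem_ker.mp (hB hb), hv] using hx
  simpa [ha] using hb

namespace Polynomial

variable (R : Type*) [CommRing R]

noncomputable def gaussianDifferential : R[X] →ₗ[R] R[X] :=
  derivative - LinearMap.mulLeft R X

variable {R}

theorem gaussianDifferential_apply (q : R[X]) :
    gaussianDifferential R q = derivative q - X * q := rfl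

theorem X_pow_add_two_eq_gaussianDifferential_add (n : ℕ) :
    (X : R[X]) ^ (n + 2) = gaussianDifferential R (-X ^ (n + 1)) + ((n + 1 : ℕ) : R) • X ^ n := by
  simp only [gaussianDifferential_apply, derivative_neg, derivative_X_pow, add_tsub_cancel_right,
    smul_eq_C_mul]
  ring

theorem range_gaussianDifferential_sup_span_one :
    LinearMap.range (gaussianDifferential R) ⊔ R ∙ 1 = ⊤ := by
  set S := LinearMap.range (gaussianDifferential R) ⊔ R ∙ 1
  have hX_pow (n : ℕ) : (X : R[X]) ^ n ∈ S := by
    induction n using Nat.twoStepInduction with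
    | zero => exact Submodule.mem_sup_right (by simp)
    | one => exact Submodule.mem_sup_left ⟨-1, by simp [gaussianDifferential_apply]⟩
    | more n hn _ =>
      rw [X_pow_add_two_eq_gaussianDifferential_add]
      exact S.add_mem (Submodule.mem_sup_left (LinearMap.mem_range_self _ _)) (S.smul_mem _ hn)
  refine Submodule.eq_top_iff'.mpr fun p => ?_
  induction p using Polynomial.induction_on' with
  | add p q hp hq => exact S.add_mem hp hq
  | monomial n a =>
    rw [← C_mul_X_pow_eq_monomial, ← smul_eq_C_mul]
    exact S.smul_mem a (hX_pow n)

end Polynomial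

theorem integrable_pow_mul_exp_neg_mul_sq {b : ℝ} (hb : 0 < b) (n : ℕ) :
    Integrable fun x : ℝ => x ^ n * Real.exp (-b * x ^ 2) := by
  simpa [Real.rpow_natCast] using
    integrable_rpow_mul_exp_neg_mul_sq hb (s := n) (by linarith [n.cast_nonneg (α := ℝ)])

theorem integrable_eval_mul_exp_neg_mul_sq {b : ℝ} (hb : 0 < b) (p : ℂ[X]) :
    Integrable fun x : ℝ => p.eval (x : ℂ) * Real.exp (-b * x ^ 2) := by
  induction p using Polynomial.induction_on' with
  | add p q hp hq =>
    simp only [eval_add, add_mul]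
    exact hp.add hq
  | monomial n a =>
    simpa [mul_assoc] using ((integrable_pow_mul_exp_neg_mul_sq hb n).ofReal (𝕜 := ℂ)).const_mul a

theorem integrable_eval_mul_gaussian (p : ℂ[X]) :
    Integrable fun x : ℝ => p.eval (x : ℂ) * Real.exp (-x ^ 2 / 2) := by
  simpa [neg_div, div_eq_inv_mul] using integrable_eval_mul_exp_neg_mul_sq one_half_pos p

theorem integral_gaussian_ne_zero : ∫ x : ℝ, (Real.exp (-x ^ 2 / 2) : ℂ) ≠ 0 := by
  have : ∫ x : ℝ, Real.exp (-x ^ 2 / 2) = √(Real.pi / (1 / 2)) := by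
    simpa [neg_div, div_eq_inv_mul] using integral_gaussian (1 / 2)
  rw [integral_complex_ofReal, this, Complex.ofReal_ne_zero]
  positivity

theorem hasDerivAt_exp_neg_sq_div_two (x : ℝ) :
    HasDerivAt (fun y : ℝ => Real.exp (-y ^ 2 / 2)) (-x * Real.exp (-x ^ 2 / 2)) x := by
  have h : HasDerivAt (fun y : ℝ => -y ^ 2 / 2) (-x) x :=
    ((hasDerivAt_pow 2 x).neg.div_const 2).congr_deriv (by ring)
  exact h.exp.congr_deriv (mul_comm _ _)

theorem hasDerivAt_eval_mul_gaussian (q : ℂ[X]) (x : ℝ) :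
    HasDerivAt (fun y : ℝ => q.eval (y : ℂ) * Real.exp (-y ^ 2 / 2))
      ((gaussianDifferential ℂ q).eval (x : ℂ) * Real.exp (-x ^ 2 / 2)) x := by
  refine ((q.hasDerivAt (x : ℂ)).comp_ofReal.mul
    (hasDerivAt_exp_neg_sq_div_two x).ofReal_comp).congr_deriv ?_
  simp only [gaussianDifferential_apply, eval_sub, eval_mul, eval_X, Complex.ofReal_mul,
    Complex.ofReal_neg]
  ring

theorem integral_gaussianDifferential_eval_mul_gaussian (q : ℂ[X]) :
    ∫ x : ℝ, (gaussianDifferential ℂ q).eval (x : ℂ) * Real.exp (-x ^ 2 / 2) = 0 :=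
  integral_eq_zero_of_hasDerivAt_of_integrable (hasDerivAt_eval_mul_gaussian q)
    (integrable_eval_mul_gaussian _) (integrable_eval_mul_gaussian q)

noncomputable def gaussianExpectationₗ : ℂ[X] →ₗ[ℂ] ℂ where
  toFun := gaussianExpectation
  map_add' p r := by
    simp only [gaussianExpectation, eval_add, add_mul,
      integral_add (integrable_eval_mul_gaussian p) (integrable_eval_mul_gaussian r), add_div]
  map_smul' a p := by
    simp only [gaussianExpectation, eval_smul, smul_eq_mul, mul_assoc, integral_const_mul,
      mul_div_assoc, RingHom.id_apply]

theorem gaussianExpectationₗ_apply (p : ℂ[X]) :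
    gaussianExpectationₗ p = gaussianExpectation p := rfl

theorem gaussianExpectation_one : gaussianExpectation 1 = 1 := by
  simpa [gaussianExpectation] using div_self integral_gaussian_ne_zero

theorem gaussianExpectation_gaussianDifferential (q : ℂ[X]) :
    gaussianExpectation (gaussianDifferential ℂ q) = 0 := by
  rw [gaussianExpectation, integral_gaussianDifferential_eval_mul_gaussian, zero_div]

theorem ker_gaussianExpectationₗ :
    LinearMap.ker gaussianExpectationₗ = LinearMap.range (gaussianDifferential ℂ) :=
  LinearMap.ker_eq_of_le_ker_of_sup_span_singleton_eq_top
    (LinearMap.range_le_ker_iff.mpr (LinearMap.ext gaussianExpectation_gaussianDifferential))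
    (by simp [gaussianExpectationₗ_apply, gaussianExpectation_one])
    range_gaussianDifferential_sup_span_one

theorem gaussian_expectation_eq_iff_homologous (p r : Polynomial ℂ) :
    gaussianExpectation p = gaussianExpectation r ↔
      ∃ q : Polynomial ℂ, p - r = derivative q - X * q := by
  have hsub : gaussianExpectation p - gaussianExpectation r = gaussianExpectationₗ (p - r) :=
    (map_sub gaussianExpectationₗ p r).symm
  rw [← sub_eq_zero, hsub, ← LinearMap.mem_ker, ker_gaussianExpectationₗ, LinearMap.mem_range]
  simp only [gaussianDifferential_apply, eq_comm]
end

section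
/- The bilinear map B on C[X] × C[X] defined by B((p, q), (r, s)) = (p′·s − r′·q, (q′ − X·q)·s − (s′ − X·s)·q) satisfies the Jacobi identity: B(u, B(v, w)) + B(v, B(w, u)) + B(w, B(u, v)) = 0 for all u, v, w in C[X] × C[X]. Together with its antisymmetry, B therefore makes C[X] × C[X] into a complex Lie algebra. -/
open Polynomial

noncomputable def gaussianBracket (u v : Polynomial ℂ × Polynomial ℂ) :
    Polynomial ℂ × Polynomial ℂ :=
  (derivative u.1 * v.2 - derivative v.1 * u.2,
    (derivative u.2 - X * u.2) * v.2 - (derivative v.2 - X * v.2) * u.2)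

theorem gaussianBracket_jacobi (u v w : Polynomial ℂ × Polynomial ℂ) :
    gaussianBracket u (gaussianBracket v w) +
      gaussianBracket v (gaussianBracket w u) +
      gaussianBracket w (gaussianBracket u v) = 0 := by
  simp only [gaussianBracket, Prod.ext_iff, Prod.fst_add, Prod.snd_add, Prod.fst_zero,
    Prod.snd_zero, derivative_sub, derivative_mul, derivative_X]
  constructor <;> ring
end

section
/- Let d be the linear map on C[X] × C[X] defined by d(p, q) = (q′ − X·q, 0), and let B be the bilinear map B((p, q), (r, s)) = (p′·s − r′·q, (q′ − X·q)·s − (s′ − X·s)·q). Then d ∘ d = 0 and d is a derivation of B: d(B(u, v)) = B(d(u), v) + B(u, d(v)) for all u, v in C[X] × C[X]. Hence (C[X] × C[X], d, B) is a differential graded Lie algebra, realizing the transported L∞ structure D^a of the Gaussian homotopy probability space. -/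
open Polynomial

noncomputable def gaussianD (u : Polynomial ℂ × Polynomial ℂ) :
    Polynomial ℂ × Polynomial ℂ :=
  (derivative u.2 - X * u.2, 0)

theorem gaussianD_square_zero_and_derivation :
    (∀ u : Polynomial ℂ × Polynomial ℂ, gaussianD (gaussianD u) = 0) ∧
    (∀ u v : Polynomial ℂ × Polynomial ℂ,
      gaussianD (gaussianBracket u v) =
        gaussianBracket (gaussianD u) v + gaussianBracket u (gaussianD v)) := by
  constructor
  · intro u
    simp [gaussianD, Prod.ext_iff]
  · intro u v
    simp only [gaussianD, gaussianBracket, Prod.mk_add_mk, Prod.ext_iff,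
      derivative_sub, derivative_mul, derivative_X, derivative_zero]
    constructor <;> ring
end
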